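/- arXiv:1411.6692 — 2 statements merged into one kernel-verified Lean document; each statement's English description precedes it below -/
import Mathlib

section
/- Let L be a split δ Jordan-Lie algebra with symmetric root system Λ, and let α ∈ Λ. Then the set Λ_α of nonzero roots connected to α is a root subsystem: it is symmetric, and if β, γ ∈ Λ_α with δ(β+γ) ∈ Λ, then δ(β+γ) ∈ Λ_α. -/
/-- A δ Jordan-Lie algebra: a vector space with a bilinear bracket satisfying
`[x,y] = -δ[y,x]` and `[x,[y,z]] = δ[[x,y],z] + δ[y,[x,z]]` with `δ = ±1`. -/
structure DeltaJordanLie (K L : Type*) [Field K] [AddCommGroup L] [Module K L] where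
  br : L →ₗ[K] L →ₗ[K] L
  delta : K
  delta_pm : delta = 1 ∨ delta = -1
  anti : ∀ x y : L, br x y = -(delta • br y x)
  jacobi : ∀ x y z : L, br x (br y z) = delta • br (br x y) z + delta • br y (br x z)

variable {K L : Type*} [Field K] [AddCommGroup L] [Module K L]

/-- The root space `L_α = {v ∈ L : [h,v] = α(h)v for all h ∈ H}`. -/
def DeltaJordanLie.rootSpace (J : DeltaJordanLie K L) (H : Submodule K L)
    (α : Module.Dual K H) : Submodule K L where
  carrier := {v : L | ∀ h : H, J.br (h : L) v = α h • v}
  zero_mem' := by intro h; simp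
  add_mem' := by intro a b ha hb h; simp [ha h, hb h, smul_add]
  smul_mem' := by intro c a ha h; rw [map_smul, ha h, smul_comm]

/-- The root system `Λ = {α ∈ H* \ {0} : L_α ≠ 0}`. -/
def DeltaJordanLie.roots (J : DeltaJordanLie K L) (H : Submodule K L) :
    Set (Module.Dual K H) :=
  {α | α ≠ 0 ∧ J.rootSpace H α ≠ ⊥}

/-- `H` is a splitting Cartan subalgebra: a maximal abelian subalgebra such that
`L` decomposes as the direct sum of the simultaneous eigenspaces `L_α`, with `L_0 = H`. -/
structure DeltaJordanLie.IsSplitting (J : DeltaJordanLie K L) (H : Submodule K L) : Prop where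
  abelian : ∀ x ∈ H, ∀ y ∈ H, J.br x y = 0
  maximal : ∀ H' : Submodule K L, H ≤ H' →
      (∀ x ∈ H', ∀ y ∈ H', J.br x y = 0) → H' = H
  zero_rootSpace : J.rootSpace H 0 = H
  indep : iSupIndep (fun α : Module.Dual K H => J.rootSpace H α)
  decomp : (⨆ α : Module.Dual K H, J.rootSpace H α) = ⊤

/-- The root system is symmetric. -/
def DeltaJordanLie.SymmetricRoots (J : DeltaJordanLie K L) (H : Submodule K L) : Prop :=
  ∀ α ∈ J.roots H, -α ∈ J.roots H

/-- The δ-twisted partial sums of a sequence of roots: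
`s₀ = f 0`, `s_{k+1} = δ • (s_k + f (k+1))`, so that
`s_k = δ^k f 0 + δ^k f 1 + δ^{k-1} f 2 + ⋯ + δ f k`. -/
def connSum {H : Submodule K L} (d : K) (f : ℕ → Module.Dual K H) : ℕ → Module.Dual K H
  | 0 => f 0
  | k + 1 => d • (connSum d f k + f (k + 1))

/-- `f 0, …, f n` is a connection from `α` to `β`: all terms are roots, `f 0 = α`,
all proper δ-twisted partial sums are roots, and the final sum is `±β`. -/
def IsConnection (J : DeltaJordanLie K L) (H : Submodule K L)
    (α β : Module.Dual K H) (n : ℕ) (f : ℕ → Module.Dual K H) : Prop :=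
  (∀ i ≤ n, f i ∈ J.roots H) ∧ f 0 = α ∧
  (∀ k < n, connSum J.delta f k ∈ J.roots H) ∧
  (connSum J.delta f n = β ∨ connSum J.delta f n = -β)

/-- `α` and `β` are connected. -/
def Connected (J : DeltaJordanLie K L) (H : Submodule K L)
    (α β : Module.Dual K H) : Prop :=
  ∃ n f, IsConnection J H α β n f

/-- `Λ_α`: the set of nonzero roots connected to `α`. -/
def connectedRoots (J : DeltaJordanLie K L) (H : Submodule K L)
    (α : Module.Dual K H) : Set (Module.Dual K H) :=
  {β ∈ J.roots H | Connected J H α β}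

/-- An ideal of a δ Jordan-Lie algebra: a submodule with `[I,L] ⊆ I` and `[L,I] ⊆ I`. -/
def IsIdeal (J : DeltaJordanLie K L) (I : Submodule K L) : Prop :=
  ∀ x ∈ I, ∀ y : L, J.br x y ∈ I ∧ J.br y x ∈ I

/-- `H_S = span{[L_β, L_{-β}] : β ∈ S}`. -/
def rootSpan (J : DeltaJordanLie K L) (H : Submodule K L)
    (S : Set (Module.Dual K H)) : Submodule K L :=
  Submodule.span K {z : L | ∃ β ∈ S, ∃ x ∈ J.rootSpace H β, ∃ y ∈ J.rootSpace H (-β),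
    z = J.br x y}

/-- `L_S = H_S ⊕ V_S`, the subalgebra associated to a set of roots `S`. -/
def decIdeal (J : DeltaJordanLie K L) (H : Submodule K L)
    (S : Set (Module.Dual K H)) : Submodule K L :=
  rootSpan J H S ⊔ ⨆ β ∈ S, J.rootSpace H β

/-!
Appending a root `γ` to a connection from `α` with final sum `β` yields a connection from `α`
to `δ(β + γ)`; if the final sum is `-β` instead, one appends `-γ`, which is a root by symmetry.
Since a connection only determines its target up to sign, `Λ_α` is symmetric.
-/

section Connection

variable {J : DeltaJordanLie K L} {H : Submodule K L}

def snocSeq {M : Type*} (f : ℕ → M) (n : ℕ) (γ : M) : ℕ → M :=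
  fun i => if i ≤ n then f i else γ

theorem connSum_congr (d : K) {f g : ℕ → Module.Dual K H} {k : ℕ}
    (h : ∀ i ≤ k, f i = g i) : connSum d f k = connSum d g k := by
  induction k with
  | zero => exact h 0 le_rfl
  | succ k ih => simp only [connSum, ih fun i hi => h i (hi.trans k.le_succ), h (k + 1) le_rfl]

theorem connSum_snocSeq_of_le (d : K) (f : ℕ → Module.Dual K H) {n k : ℕ} (γ : Module.Dual K H)
    (hk : k ≤ n) : connSum d (snocSeq f n γ) k = connSum d f k :=
  connSum_congr d fun _ hi => if_pos (hi.trans hk)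

theorem connSum_snocSeq_succ (d : K) (f : ℕ → Module.Dual K H) (n : ℕ) (γ : Module.Dual K H) :
    connSum d (snocSeq f n γ) (n + 1) = d • (connSum d f n + γ) := by
  rw [connSum, connSum_snocSeq_of_le d f γ le_rfl, snocSeq, if_neg n.lt_succ_self.not_ge]

theorem IsConnection.neg {α β : Module.Dual K H} {n : ℕ} {f : ℕ → Module.Dual K H}
    (h : IsConnection J H α β n f) : IsConnection J H α (-β) n f := by
  obtain ⟨hroots, hstart, hsums, hend⟩ := h
  exact ⟨hroots, hstart, hsums, by rwa [neg_neg, or_comm]⟩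

theorem IsConnection.snoc {α β γ : Module.Dual K H} {n : ℕ} {f : ℕ → Module.Dual K H}
    (h : IsConnection J H α β n f) (hsum : connSum J.delta f n ∈ J.roots H)
    (hγ : γ ∈ J.roots H) :
    IsConnection J H α (J.delta • (connSum J.delta f n + γ)) (n + 1) (snocSeq f n γ) := by
  obtain ⟨hroots, hstart, hsums, -⟩ := h
  refine ⟨fun i _ => ?_, by simpa [snocSeq] using hstart, fun k hk => ?_,
    Or.inl (connSum_snocSeq_succ _ f n γ)⟩
  · by_cases hi : i ≤ n
    · simpa [snocSeq, hi] using hroots i hi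
    · simpa [snocSeq, hi] using hγ
  · rw [connSum_snocSeq_of_le _ f γ (Nat.le_of_lt_succ hk)]
    rcases (Nat.le_of_lt_succ hk).lt_or_eq with hk | rfl
    · exact hsums k hk
    · exact hsum

theorem Connected.neg {α β : Module.Dual K H} (h : Connected J H α β) :
    Connected J H α (-β) :=
  let ⟨n, f, hf⟩ := h
  ⟨n, f, hf.neg⟩

theorem Connected.delta_smul_add (hsym : J.SymmetricRoots H) {α β γ : Module.Dual K H}
    (hβ : β ∈ J.roots H) (hγ : γ ∈ J.roots H) (h : Connected J H α β) :
    Connected J H α (J.delta • (β + γ)) := by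
  obtain ⟨n, f, hf⟩ := h
  rcases hf.2.2.2 with hend | hend
  · have hext := hf.snoc (hend ▸ hβ) hγ
    rw [hend] at hext
    exact ⟨_, _, hext⟩
  · have hext := hf.snoc (hend ▸ hsym β hβ) (hsym γ hγ)
    rw [hend, ← neg_add, smul_neg] at hext
    exact ⟨_, _, by simpa only [neg_neg] using hext.neg⟩

end Connection

theorem stmt4_general (J : DeltaJordanLie K L) (H : Submodule K L)
    (hsym : J.SymmetricRoots H) (α : Module.Dual K H) :
    (∀ β ∈ connectedRoots J H α, -β ∈ connectedRoots J H α) ∧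
    (∀ β ∈ connectedRoots J H α, ∀ γ ∈ connectedRoots J H α,
      J.delta • (β + γ) ∈ J.roots H → J.delta • (β + γ) ∈ connectedRoots J H α) := by
  constructor
  · rintro β ⟨hβ, hconn⟩
    exact ⟨hsym β hβ, hconn.neg⟩
  · rintro β ⟨hβ, hconn⟩ γ ⟨hγ, -⟩ hroot
    exact ⟨hroot, hconn.delta_smul_add hsym hβ hγ⟩

/-- `Λ_α` is a root subsystem: symmetric and closed under
`(β,γ) ↦ δ(β+γ)` whenever `δ(β+γ) ∈ Λ`. -/
theorem stmt4 (J : DeltaJordanLie K L) (H : Submodule K L) (hs : J.IsSplitting H)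
    (hsym : J.SymmetricRoots H) (α : Module.Dual K H) (hα : α ∈ J.roots H) :
    (∀ β ∈ connectedRoots J H α, -β ∈ connectedRoots J H α) ∧
    (∀ β ∈ connectedRoots J H α, ∀ γ ∈ connectedRoots J H α,
      J.delta • (β + γ) ∈ J.roots H → J.delta • (β + γ) ∈ connectedRoots J H α) :=
  stmt4_general J H hsym α
end

section
/- Let L be a split δ Jordan-Lie algebra with symmetric root system Λ, and let Λ₀ ⊆ Λ be a root subsystem. Then L_{Λ₀} := H_{Λ₀} ⊕ V_{Λ₀}, where H_{Λ₀} = span{[L_α, L_{-α}] : α ∈ Λ₀} and V_{Λ₀} = ⊕_{α∈Λ₀} L_α, is a subalgebra of L (i.e., closed under the bracket). -/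
variable {K L : Type*} [Field K] [AddCommGroup L] [Module K L]

/-! Since `[L_α, L_β] ⊆ L_{δ(α+β)}` and `L_0 = H`, the bracket of root vectors for `α, β ∈ Λ₀`
is a generator of `H_{Λ₀}` when `β = -α`, lies in `L_{δ(α+β)}` with `δ(α+β) ∈ Λ₀` when that is
a root, and vanishes otherwise. Elements of `H_{Λ₀} ⊆ H` act on each `L_β` by scalars, and `H`
is abelian. -/

namespace DeltaJordanLie

variable (J : DeltaJordanLie K L) (H : Submodule K L)

theorem delta_ne_zero : J.delta ≠ 0 := by
  rcases J.delta_pm with h | h <;> simp [h]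

variable {J H}

theorem br_mem_rootSpace {α β : Module.Dual K H} {x y : L}
    (hx : x ∈ J.rootSpace H α) (hy : y ∈ J.rootSpace H β) :
    J.br x y ∈ J.rootSpace H (J.delta • (α + β)) := by
  intro h
  rw [J.jacobi, hx h, hy h]
  simp only [map_smul, LinearMap.smul_apply, smul_smul, LinearMap.add_apply, smul_eq_mul]
  rw [← add_smul]
  congr 1
  ring

theorem rootSpace_eq_bot_of_notMem_roots {α : Module.Dual K H} (hα : α ≠ 0)
    (h : α ∉ J.roots H) : J.rootSpace H α = ⊥ :=
  not_not.mp fun hne => h ⟨hα, hne⟩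

theorem br_mem_rootSpace_of_mem_left {β : Module.Dual K H} {h y : L} (hh : h ∈ H)
    (hy : y ∈ J.rootSpace H β) : J.br h y ∈ J.rootSpace H β := by
  rw [hy ⟨h, hh⟩]
  exact Submodule.smul_mem _ _ hy

theorem br_mem_rootSpace_of_mem_right {β : Module.Dual K H} {h y : L} (hh : h ∈ H)
    (hy : y ∈ J.rootSpace H β) : J.br y h ∈ J.rootSpace H β := by
  rw [J.anti]
  exact neg_mem (Submodule.smul_mem _ _ (br_mem_rootSpace_of_mem_left hh hy))

theorem rootSpan_le (hs : J.IsSplitting H) (S : Set (Module.Dual K H)) :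
    rootSpan J H S ≤ H := by
  rw [rootSpan, Submodule.span_le]
  rintro z ⟨β, -, x, hx, y, hy, rfl⟩
  simpa [← hs.zero_rootSpace] using br_mem_rootSpace hx hy

end DeltaJordanLie

open DeltaJordanLie

section decIdeal

variable {J : DeltaJordanLie K L} {H : Submodule K L} {S : Set (Module.Dual K H)}

theorem rootSpace_le_decIdeal {β : Module.Dual K H} (hβ : β ∈ S) :
    J.rootSpace H β ≤ decIdeal J H S :=
  le_sup_of_le_right (le_biSup (fun β => J.rootSpace H β) hβ)

theorem br_mem_decIdeal_of_mem_rootSpace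
    (hS : ∀ α ∈ S, ∀ β ∈ S, J.delta • (α + β) ∈ J.roots H → J.delta • (α + β) ∈ S)
    {α β : Module.Dual K H} (hα : α ∈ S) (hβ : β ∈ S) {x y : L}
    (hx : x ∈ J.rootSpace H α) (hy : y ∈ J.rootSpace H β) :
    J.br x y ∈ decIdeal J H S := by
  by_cases hsum : α + β = 0
  · obtain rfl : β = -α := eq_neg_of_add_eq_zero_right hsum
    exact Submodule.mem_sup_left (Submodule.subset_span ⟨α, hα, x, hx, y, hy, rfl⟩)
  by_cases hroot : J.delta • (α + β) ∈ J.roots H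
  · exact rootSpace_le_decIdeal (hS α hα β hβ hroot) (br_mem_rootSpace hx hy)
  · have hzero := br_mem_rootSpace hx hy
    rw [rootSpace_eq_bot_of_notMem_roots (smul_ne_zero J.delta_ne_zero hsum) hroot,
      Submodule.mem_bot] at hzero
    rw [hzero]
    exact zero_mem _

theorem map₂_br_decIdeal_le (hs : J.IsSplitting H)
    (hS : ∀ α ∈ S, ∀ β ∈ S, J.delta • (α + β) ∈ J.roots H → J.delta • (α + β) ∈ S) :
    Submodule.map₂ J.br (decIdeal J H S) (decIdeal J H S) ≤ decIdeal J H S := by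
  have hH : rootSpan J H S ≤ H := rootSpan_le hs S
  change Submodule.map₂ J.br (rootSpan J H S ⊔ ⨆ β ∈ S, J.rootSpace H β)
    (rootSpan J H S ⊔ ⨆ β ∈ S, J.rootSpace H β) ≤ decIdeal J H S
  simp only [Submodule.map₂_sup_left, Submodule.map₂_sup_right, Submodule.map₂_iSup_left,
    Submodule.map₂_iSup_right, sup_le_iff, iSup_le_iff, Submodule.map₂_le]
  refine ⟨⟨fun h hh h' hh' => ?_, fun β hβ y hy h hh => ?_⟩,
    fun β hβ => ⟨fun h hh y hy => ?_, fun α hα x hx y hy => ?_⟩⟩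
  · rw [hs.abelian h (hH hh) h' (hH hh')]
    exact zero_mem _
  · exact rootSpace_le_decIdeal hβ (br_mem_rootSpace_of_mem_right (hH hh) hy)
  · exact rootSpace_le_decIdeal hβ (br_mem_rootSpace_of_mem_left (hH hh) hy)
  · exact br_mem_decIdeal_of_mem_rootSpace hS hα hβ hx hy

end decIdeal

theorem stmt16_general (J : DeltaJordanLie K L) (H : Submodule K L) (hs : J.IsSplitting H)
    (Λ₀ : Set (Module.Dual K H))
    (h₀closed : ∀ α ∈ Λ₀, ∀ β ∈ Λ₀, J.delta • (α + β) ∈ J.roots H →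
      J.delta • (α + β) ∈ Λ₀) :
    ∀ x ∈ decIdeal J H Λ₀, ∀ y ∈ decIdeal J H Λ₀, J.br x y ∈ decIdeal J H Λ₀ :=
  fun _ hx _ hy => map₂_br_decIdeal_le hs h₀closed (Submodule.apply_mem_map₂ _ hx hy)

/-- for a root subsystem `Λ₀`, `L_{Λ₀} = H_{Λ₀} ⊕ V_{Λ₀}` is closed
under the bracket, i.e. it is a subalgebra of `L`. -/
theorem stmt16 (J : DeltaJordanLie K L) (H : Submodule K L) (hs : J.IsSplitting H)
    (hsym : J.SymmetricRoots H) (Λ₀ : Set (Module.Dual K H))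
    (hsub : Λ₀ ⊆ J.roots H)
    (h₀sym : ∀ α ∈ Λ₀, -α ∈ Λ₀)
    (h₀closed : ∀ α ∈ Λ₀, ∀ β ∈ Λ₀, J.delta • (α + β) ∈ J.roots H →
      J.delta • (α + β) ∈ Λ₀) :
    ∀ x ∈ decIdeal J H Λ₀, ∀ y ∈ decIdeal J H Λ₀, J.br x y ∈ decIdeal J H Λ₀ :=
  stmt16_general J H hs Λ₀ h₀closed
end
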